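/- With D as defined below, min over 0 ≤ x ≤ 1 of D(x) is attained and is strictly negative, and every global minimizer x* of D satisfies Φ(x*) = x*, i.e. the minimum of the first variation of the energy is attained only at fixed points of the cumulative distribution function. -/

import Mathlib

/-!
Write `s = sign (Φ - id)` and `R x = ∫_x^1 s φ`. Splitting the integrals in `D` and integrating
by parts (`Φ R` vanishes at `0` and `1`, and `R` is differentiable off the finitely many fixed
points) gives `D x = ∫_0^1 R φ - R x + |x - Φ x|` on `[0, 1]`. If `Φ x ≠ x`, then on the segment
from `x` to the nearest fixed point `p` below `x` (if `Φ x > x`) or above it (if `Φ x < x`) the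
integrand `s φ` has constant sign, so `R x < R p`. Hence `R` is maximal only at fixed points,
`D p = ∫_0^1 R φ - R p < 0` at a maximiser `p` of `R`, and a minimiser `x` of `D` must be fixed,
since otherwise `D p = ∫_0^1 R φ - R p < D x`.
-/

open MeasureTheory Set intervalIntegral
open scoped Interval

namespace Real

theorem measurable_sign : Measurable Real.sign := by
  unfold Real.sign
  exact Measurable.ite measurableSet_Iio measurable_const <|
    Measurable.ite measurableSet_Ioi measurable_const measurable_const

theorem abs_sign_le_one (r : ℝ) : |Real.sign r| ≤ 1 := by
  rcases sign_apply_eq r with h | h | h <;> simp [h]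

theorem continuousAt_sign_of_ne_zero {r : ℝ} (hr : r ≠ 0) : ContinuousAt Real.sign r := by
  rcases hr.lt_or_gt with h | h
  · exact continuousAt_const.congr <| by
      filter_upwards [Iio_mem_nhds h] with t ht using (sign_of_neg ht).symm
  · exact continuousAt_const.congr <| by
      filter_upwards [Ioi_mem_nhds h] with t ht using (sign_of_pos ht).symm

end Real

theorem ContinuousOn.intervalIntegrable_sign_comp {g : ℝ → ℝ} {a b : ℝ}
    (hg : ContinuousOn g [[a, b]]) : IntervalIntegrable (fun t => Real.sign (g t)) volume a b :=
  IntegrableOn.intervalIntegrable <| IntegrableOn.of_bound measure_Icc_lt_top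
    (Real.measurable_sign.comp_aemeasurable
      (hg.aemeasurable measurableSet_uIcc)).aestronglyMeasurable 1
    (ae_of_all _ fun _ => Real.abs_sign_le_one _)

theorem ContinuousOn.exists_zero_and_pos_on_Ioc {g : ℝ → ℝ} {a b : ℝ}
    (hab : a ≤ b) (hg : ContinuousOn g (Icc a b)) (ha : g a = 0) (hb : 0 < g b) :
    ∃ z ∈ Ico a b, g z = 0 ∧ ∀ t ∈ Ioc z b, 0 < g t := by
  set Z := {t ∈ Icc a b | g t = 0}
  have hZ : IsCompact Z := isCompact_Icc.of_isClosed_subset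
    (hg.preimage_isClosed_of_isClosed isClosed_Icc isClosed_singleton) (fun t ht => ht.1)
  have hzZ : sSup Z ∈ Z := hZ.sSup_mem ⟨a, ⟨le_rfl, hab⟩, ha⟩
  refine ⟨sSup Z, ⟨hzZ.1.1, lt_of_le_of_ne hzZ.1.2 fun h => ?_⟩, hzZ.2, fun t ht => ?_⟩
  · exact hb.ne' (h ▸ hzZ.2)
  by_contra! hle
  obtain ⟨u, hu, hu0⟩ := intermediate_value_Icc ht.2 (hg.mono (Icc_subset_Icc
    (hzZ.1.1.trans ht.1.le) le_rfl)) ⟨hle, hb.le⟩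
  have : u ≤ sSup Z := le_csSup hZ.bddAbove
    ⟨⟨hzZ.1.1.trans (ht.1.le.trans hu.1), hu.2⟩, hu0⟩
  linarith [ht.1, hu.1]

theorem ContinuousOn.exists_zero_and_neg_on_Ico {g : ℝ → ℝ} {a b : ℝ}
    (hab : a ≤ b) (hg : ContinuousOn g (Icc a b)) (ha : g a < 0) (hb : g b = 0) :
    ∃ z ∈ Ioc a b, g z = 0 ∧ ∀ t ∈ Ico a z, g t < 0 := by
  have hg' : ContinuousOn (fun u => -g (-u)) (Icc (-b) (-a)) :=
    (hg.comp continuousOn_neg fun u hu => ⟨le_neg.1 hu.2, neg_le.1 hu.1⟩).neg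
  obtain ⟨z, hz, hz0, hpos⟩ := hg'.exists_zero_and_pos_on_Ioc (neg_le_neg hab)
    (by simp [hb]) (by simpa using ha)
  refine ⟨-z, ⟨lt_neg.1 hz.2, neg_le.2 hz.1⟩, by simpa using hz0, fun t ht => ?_⟩
  simpa using hpos (-t) ⟨lt_neg.1 ht.2, neg_le_neg ht.1⟩

theorem integral_mul_primitive_eq_integral_primitive_mul {f h : ℝ → ℝ} {a b : ℝ} (hab : a ≤ b)
    (hf : ContinuousOn f (Icc a b)) (hh : IntervalIntegrable h volume a b) {S : Set ℝ}
    (hS : S.Countable) (hhS : ∀ x ∈ Ioo a b \ S, ContinuousAt h x) :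
    ∫ t in a..b, h t * ∫ u in a..t, f u = ∫ t in a..b, (∫ u in t..b, h u) * f t := by
  set F := fun x => ∫ u in a..x, f u
  set H := fun x => ∫ u in x..b, h u
  have hfi : IntervalIntegrable f volume a b := hf.intervalIntegrable_of_Icc hab
  have hFc : ContinuousOn F (Icc a b) := by
    simpa [uIcc_of_le hab] using continuousOn_primitive_interval' hfi left_mem_uIcc
  have hHc : ContinuousOn H (Icc a b) := by
    have := continuousOn_primitive_interval_left (μ := volume) (a := a) (b := b) (f := h)
      (by rw [uIcc_of_le hab]; exact (intervalIntegrable_iff_integrableOn_Icc_of_le hab).1 hh)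
    rwa [uIcc_of_le hab] at this
  have hderiv : ∀ x ∈ Ioo (min a b) (max a b) \ S,
      HasDerivAt (fun x => F x * H x) (f x * H x + F x * -h x) x := by
    rintro x ⟨hx, hxS⟩
    rw [min_eq_left hab, max_eq_right hab] at hx
    have hxI : x ∈ Icc a b := Ioo_subset_Icc_self hx
    have hF : HasDerivAt F (f x) x :=
      integral_hasDerivAt_right
        (hfi.mono_set (uIcc_subset_uIcc_left (by simpa [uIcc_of_le hab])))
        (AEStronglyMeasurable.stronglyMeasurableAtFilter_of_mem hfi.1.aestronglyMeasurable
          (Ioc_mem_nhds hx.1 hx.2)) (hf.continuousAt (Icc_mem_nhds hx.1 hx.2))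
    have hH : HasDerivAt H (-h x) x :=
      integral_hasDerivAt_left
        (hh.mono_set (uIcc_subset_uIcc_right (by simpa [uIcc_of_le hab])))
        (AEStronglyMeasurable.stronglyMeasurableAtFilter_of_mem hh.1.aestronglyMeasurable
          (Ioc_mem_nhds hx.1 hx.2))
        (hhS x ⟨hx, hxS⟩)
    exact hF.mul hH
  have hfH : IntervalIntegrable (fun x => f x * H x) volume a b :=
    (hf.mul hHc).intervalIntegrable_of_Icc hab
  have hFh : IntervalIntegrable (fun x => F x * -h x) volume a b :=
    hh.neg.continuousOn_mul (by rwa [uIcc_of_le hab])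
  have hFH := integral_eq_of_hasDerivAt_off_countable _ _ hS
    (by rw [uIcc_of_le hab]; exact hFc.mul hHc) hderiv (hfH.add hFh)
  simp only [F, H, integral_same, mul_zero, zero_mul, sub_zero] at hFH
  rw [integral_add hfH hFh] at hFH
  simp only [F, H, mul_neg, intervalIntegral.integral_neg] at hFH
  simp only [mul_comm (h _), mul_comm (∫ u in _..b, h u)]
  linarith

noncomputable def signedTail (φ Φ : ℝ → ℝ) (x : ℝ) : ℝ :=
  ∫ t in x..1, Real.sign (Φ t - t) * φ t

noncomputable def firstVariation (φ Φ : ℝ → ℝ) (x : ℝ) : ℝ :=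
  (∫ t in (0 : ℝ)..x, Real.sign (Φ t - t) * Φ t * φ t) +
    (∫ t in x..(1 : ℝ), Real.sign (Φ t - t) * (Φ t - 1) * φ t) + |x - Φ x|

section FixedPoints

variable {φ Φ : ℝ → ℝ}

theorem intervalIntegrable_sign_sub_mul (hΦc : ContinuousOn Φ (Icc 0 1)) {F : ℝ → ℝ}
    (hF : ContinuousOn F (Icc 0 1)) {a b : ℝ} (ha : a ∈ Icc (0 : ℝ) 1) (hb : b ∈ Icc (0 : ℝ) 1) :
    IntervalIntegrable (fun t => Real.sign (Φ t - t) * F t) volume a b :=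
  ((hΦc.sub continuousOn_id).mono (uIcc_subset_Icc ha hb)).intervalIntegrable_sign_comp
    |>.mul_continuousOn (hF.mono (uIcc_subset_Icc ha hb))

theorem signedTail_sub_signedTail (hφ : ContinuousOn φ (Icc 0 1))
    (hΦc : ContinuousOn Φ (Icc 0 1)) {a b : ℝ} (ha : a ∈ Icc (0 : ℝ) 1) (hb : b ∈ Icc (0 : ℝ) 1) :
    signedTail φ Φ a - signedTail φ Φ b = ∫ t in a..b, Real.sign (Φ t - t) * φ t := by
  rw [signedTail, signedTail, ← integral_add_adjacent_intervals
    (intervalIntegrable_sign_sub_mul hΦc hφ ha hb)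
    (intervalIntegrable_sign_sub_mul hΦc hφ hb ⟨zero_le_one, le_rfl⟩), add_sub_cancel_right]

theorem continuousOn_signedTail (hφ : ContinuousOn φ (Icc 0 1))
    (hΦc : ContinuousOn Φ (Icc 0 1)) : ContinuousOn (signedTail φ Φ) (Icc 0 1) := by
  have := continuousOn_primitive_interval_left (μ := volume) (a := 0) (b := 1)
    (f := fun t => Real.sign (Φ t - t) * φ t) <| by
      rw [uIcc_of_le zero_le_one, ← intervalIntegrable_iff_integrableOn_Icc_of_le zero_le_one]
      exact intervalIntegrable_sign_sub_mul hΦc hφ ⟨le_rfl, zero_le_one⟩ ⟨zero_le_one, le_rfl⟩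
  rwa [uIcc_of_le zero_le_one] at this

theorem exists_fixedPoint_signedTail_lt (hφ : ContinuousOn φ (Icc 0 1))
    (hφpos : ∀ t ∈ Icc (0 : ℝ) 1, 0 < φ t) (hΦc : ContinuousOn Φ (Icc 0 1)) (hΦ0 : Φ 0 = 0)
    (hΦ1 : Φ 1 = 1) {x : ℝ} (hx : x ∈ Icc (0 : ℝ) 1) (hne : Φ x ≠ x) :
    ∃ p ∈ Icc (0 : ℝ) 1, Φ p = p ∧ signedTail φ Φ x < signedTail φ Φ p := by
  have hg : ContinuousOn (fun t => Φ t - t) (Icc 0 1) := hΦc.sub continuousOn_id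
  rcases hne.lt_or_gt with hlt | hgt
  · obtain ⟨p, hp, hp0, hneg⟩ :=
      (hg.mono (Icc_subset_Icc hx.1 le_rfl)).exists_zero_and_neg_on_Ico hx.2
        (sub_neg.2 hlt) (by simp [hΦ1])
    have hpI : p ∈ Icc (0 : ℝ) 1 := ⟨hx.1.trans hp.1.le, hp.2⟩
    refine ⟨p, hpI, sub_eq_zero.1 hp0, ?_⟩
    have hpos : 0 < ∫ t in x..p, -(Real.sign (Φ t - t) * φ t) :=
      intervalIntegral_pos_of_pos_on (intervalIntegrable_sign_sub_mul hΦc hφ hx hpI).neg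
        (fun t ht => by
          rw [Real.sign_of_neg (hneg t ⟨ht.1.le, ht.2⟩)]
          linarith [hφpos t ⟨hx.1.trans ht.1.le, ht.2.le.trans hp.2⟩])
        hp.1
    rw [← sub_pos, signedTail_sub_signedTail hφ hΦc hpI hx, integral_symm,
      ← intervalIntegral.integral_neg]
    exact hpos
  · obtain ⟨p, hp, hp0, hpos⟩ :=
      (hg.mono (Icc_subset_Icc le_rfl hx.2)).exists_zero_and_pos_on_Ioc hx.1
        (by simp [hΦ0]) (sub_pos.2 hgt)
    have hpI : p ∈ Icc (0 : ℝ) 1 := ⟨hp.1, hp.2.le.trans hx.2⟩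
    refine ⟨p, hpI, sub_eq_zero.1 hp0, ?_⟩
    rw [← sub_pos, signedTail_sub_signedTail hφ hΦc hpI hx]
    refine intervalIntegral_pos_of_pos_on (intervalIntegrable_sign_sub_mul hΦc hφ hpI hx)
      (fun t ht => ?_) hp.2
    rw [Real.sign_of_pos (hpos t ⟨ht.1, ht.2.le⟩), one_mul]
    exact hφpos t ⟨hp.1.trans ht.1.le, ht.2.le.trans hx.2⟩

theorem exists_fixedPoint_integral_signedTail_mul_lt (hφ : ContinuousOn φ (Icc 0 1))
    (hφpos : ∀ t ∈ Icc (0 : ℝ) 1, 0 < φ t) (hint : ∫ t in (0 : ℝ)..1, φ t = 1)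
    (hΦc : ContinuousOn Φ (Icc 0 1)) (hΦ0 : Φ 0 = 0) (hΦ1 : Φ 1 = 1)
    (hfin : {x ∈ Icc (0 : ℝ) 1 | Φ x = x}.Finite) :
    ∃ p ∈ Icc (0 : ℝ) 1, Φ p = p ∧
      ∫ t in (0 : ℝ)..1, signedTail φ Φ t * φ t < signedTail φ Φ p := by
  have hR := continuousOn_signedTail hφ hΦc
  obtain ⟨p, hp, hmax⟩ := isCompact_Icc.exists_isMaxOn ⟨0, le_rfl, zero_le_one⟩ hR
  have hlt_max {y : ℝ} (hy : y ∈ Icc (0 : ℝ) 1) (hne : Φ y ≠ y) :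
      signedTail φ Φ y < signedTail φ Φ p := by
    obtain ⟨q, hq, -, hlt⟩ := exists_fixedPoint_signedTail_lt hφ hφpos hΦc hΦ0 hΦ1 hy hne
    exact hlt.trans_le (hmax hq)
  refine ⟨p, hp, not_not.1 fun hne => (hlt_max hp hne).false, ?_⟩
  obtain ⟨y, hy, hyfix⟩ := ((Icc_infinite zero_lt_one).sdiff hfin).nonempty
  calc ∫ t in (0 : ℝ)..1, signedTail φ Φ t * φ t
      < ∫ t in (0 : ℝ)..1, signedTail φ Φ p * φ t :=
        integral_lt_integral_of_continuousOn_of_le_of_exists_lt zero_lt_one (hR.mul hφ)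
          (continuousOn_const.mul hφ)
          (fun t ht => mul_le_mul_of_nonneg_right (hmax (Ioc_subset_Icc_self ht))
            (hφpos t (Ioc_subset_Icc_self ht)).le)
          ⟨y, hy, mul_lt_mul_of_pos_right (hlt_max hy fun h => hyfix ⟨hy, h⟩) (hφpos y hy)⟩
    _ = signedTail φ Φ p := by rw [intervalIntegral.integral_const_mul, hint, mul_one]

theorem firstVariation_eq (hφ : ContinuousOn φ (Icc 0 1)) (hΦc : ContinuousOn Φ (Icc 0 1))
    (hΦ : ∀ x ∈ Icc (0 : ℝ) 1, Φ x = ∫ t in (0 : ℝ)..x, φ t)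
    (hfix : {x ∈ Icc (0 : ℝ) 1 | Φ x = x}.Countable) {x : ℝ} (hx : x ∈ Icc (0 : ℝ) 1) :
    firstVariation φ Φ x =
      (∫ t in (0 : ℝ)..1, signedTail φ Φ t * φ t) - signedTail φ Φ x + |x - Φ x| := by
  have h0 : (0 : ℝ) ∈ Icc (0 : ℝ) 1 := ⟨le_rfl, zero_le_one⟩
  have h1 : (1 : ℝ) ∈ Icc (0 : ℝ) 1 := ⟨zero_le_one, le_rfl⟩
  have hintegrable {F : ℝ → ℝ} (hF : ContinuousOn F (Icc 0 1)) {a b : ℝ}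
      (ha : a ∈ Icc (0 : ℝ) 1) (hb : b ∈ Icc (0 : ℝ) 1) :
      IntervalIntegrable (fun t => Real.sign (Φ t - t) * F t * φ t) volume a b :=
    (intervalIntegrable_sign_sub_mul hΦc hF ha hb).mul_continuousOn
      (hφ.mono (uIcc_subset_Icc ha hb))
  have hparts : ∫ t in (0 : ℝ)..1, Real.sign (Φ t - t) * Φ t * φ t =
      ∫ t in (0 : ℝ)..1, signedTail φ Φ t * φ t := by
    unfold signedTail
    rw [← integral_mul_primitive_eq_integral_primitive_mul zero_le_one hφ
      (intervalIntegrable_sign_sub_mul hΦc hφ h0 h1) hfix fun y ⟨hy, hyfix⟩ => ?_]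
    · refine integral_congr fun t ht => ?_
      rw [uIcc_of_le zero_le_one] at ht
      simp only [hΦ t ht]
      ring
    have hyI := Ioo_subset_Icc_self hy
    have hnhds := Icc_mem_nhds hy.1 hy.2
    exact ((Real.continuousAt_sign_of_ne_zero (sub_ne_zero.2 fun h => hyfix ⟨hyI, h⟩)).comp
      (f := fun t => Φ t - t) ((hΦc.continuousAt hnhds).sub continuousAt_id)).mul
      (hφ.continuousAt hnhds)
  have htail : ∫ t in x..1, Real.sign (Φ t - t) * (Φ t - 1) * φ t =
      (∫ t in x..1, Real.sign (Φ t - t) * Φ t * φ t) - signedTail φ Φ x := by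
    rw [signedTail, ← integral_sub (hintegrable hΦc hx h1)
      (intervalIntegrable_sign_sub_mul hΦc hφ hx h1)]
    exact integral_congr fun t _ => by ring
  rw [firstVariation, htail, ← hparts,
    ← integral_add_adjacent_intervals (hintegrable hΦc h0 hx) (hintegrable hΦc hx h1)]
  ring

end FixedPoints

/-- the first variation
`D(x) = ∫_0^x sign(Φ(t)−t) Φ(t) φ(t) dt + ∫_x^1 sign(Φ(t)−t) (Φ(t)−1) φ(t) dt + |x − Φ(x)|`
attains a strictly negative minimum on `[0,1]`, and every global minimizer is a fixed point
of the cumulative distribution function `Φ`. -/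
theorem stmt_13 (φ Φ : ℝ → ℝ) (c C : ℝ) (hc : 0 < c)
    (hφcont : ContinuousOn φ (Set.Icc 0 1))
    (hφ : ∀ t ∈ Set.Icc (0 : ℝ) 1, c ≤ φ t ∧ φ t ≤ C)
    (hint : (∫ t in (0 : ℝ)..1, φ t) = 1)
    (hΦ : ∀ x ∈ Set.Icc (0 : ℝ) 1, Φ x = ∫ t in (0 : ℝ)..x, φ t)
    (hfin : {x ∈ Set.Icc (0 : ℝ) 1 | Φ x = x}.Finite)
    (D : ℝ → ℝ)
    (hD : ∀ x, D x = (∫ t in (0 : ℝ)..x, Real.sign (Φ t - t) * Φ t * φ t) +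
      (∫ t in x..(1 : ℝ), Real.sign (Φ t - t) * (Φ t - 1) * φ t) + |x - Φ x|) :
    (∃ x ∈ Set.Icc (0 : ℝ) 1, (∀ y ∈ Set.Icc (0 : ℝ) 1, D x ≤ D y) ∧ D x < 0) ∧
    ∀ x ∈ Set.Icc (0 : ℝ) 1, (∀ y ∈ Set.Icc (0 : ℝ) 1, D x ≤ D y) → Φ x = x := by
  have h0 : (0 : ℝ) ∈ Icc (0 : ℝ) 1 := ⟨le_rfl, zero_le_one⟩
  have h1 : (1 : ℝ) ∈ Icc (0 : ℝ) 1 := ⟨zero_le_one, le_rfl⟩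
  have hφpos : ∀ t ∈ Icc (0 : ℝ) 1, 0 < φ t := fun t ht => hc.trans_le (hφ t ht).1
  have hΦc : ContinuousOn Φ (Icc 0 1) := by
    have := continuousOn_primitive_interval (μ := volume) (a := 0) (b := 1)
      (by rw [uIcc_of_le zero_le_one]; exact hφcont.integrableOn_Icc)
    rw [uIcc_of_le zero_le_one] at this
    exact this.congr hΦ
  have hΦ0 : Φ 0 = 0 := by rw [hΦ 0 h0, integral_same]
  have hΦ1 : Φ 1 = 1 := by rw [hΦ 1 h1, hint]
  set R := signedTail φ Φ
  set E := ∫ t in (0 : ℝ)..1, R t * φ t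
  have hDR : ∀ x ∈ Icc (0 : ℝ) 1, D x = E - R x + |x - Φ x| := fun x hx =>
    (hD x).trans (firstVariation_eq hφcont hΦc hΦ hfin.countable hx)
  have hmin_fixed : ∀ x ∈ Icc (0 : ℝ) 1, (∀ y ∈ Icc (0 : ℝ) 1, D x ≤ D y) → Φ x = x := by
    intro x hx hmin
    by_contra hne
    obtain ⟨p, hp, hpfix, hlt⟩ :=
      exists_fixedPoint_signedTail_lt hφcont hφpos hΦc hΦ0 hΦ1 hx hne
    have := hmin p hp
    rw [hDR x hx, hDR p hp, hpfix, sub_self, abs_zero] at this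
    linarith [abs_nonneg (x - Φ x)]
  obtain ⟨p, hp, hpfix, hEp⟩ :=
    exists_fixedPoint_integral_signedTail_mul_lt hφcont hφpos hint hΦc hΦ0 hΦ1 hfin
  have hDc : ContinuousOn D (Icc 0 1) :=
    ((continuousOn_const.sub (continuousOn_signedTail hφcont hΦc)).add
      (continuousOn_id.sub hΦc).abs).congr hDR
  obtain ⟨x, hx, hxmin⟩ := isCompact_Icc.exists_isMinOn ⟨0, h0⟩ hDc
  refine ⟨⟨x, hx, fun y hy => hxmin hy, ?_⟩, hmin_fixed⟩
  calc D x ≤ D p := hxmin hp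
    _ = E - R p := by rw [hDR p hp, hpfix, sub_self, abs_zero, add_zero]
    _ < 0 := sub_neg.2 hEp
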